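/- There exists m₀ such that for all m ≥ m₀, zero is a regular value of u_m on the open unit ball B₁ ⊂ ℝ^n: at every point of B₁ where u_m = 0, the gradient ∇u_m is nonzero. Here u_m(X,y,z,w) = |X|² - ℓy² + η_m·e^{λ_m·x₁}·cos(λ_m·z), λ_m = 8πm, η_m = e^{-λ_m}·λ_m^{-4}. -/

import Mathlib

/-! At a critical zero of `u_m` the `y`- and `z`-derivatives force `y = 0` and `sin (λ z) = 0`, and
the `xᵢ`-derivatives for `i ≥ 2` force `xᵢ = 0`. With `x = x₁` and `K = cos (λ z) = ±1`, the
equations `x² + η e^{λx} K = 0` and `2x + λ η e^{λx} K = 0` then give `λ x = 2`, `K = -1` and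
`η e² λ² = 4`, which `η_m = e^{-λ} λ⁻⁴` is far too small to satisfy once `λ ≥ 2`. -/

open Real

theorem HasFDerivAt.apply_eq_zero_of_gradient_eq_zero {F : Type*} [NormedAddCommGroup F]
    [InnerProductSpace ℝ F] [CompleteSpace F] {f : F → ℝ} {L : StrongDual ℝ F} {x : F}
    (hf : HasFDerivAt f L x) (h : gradient f x = 0) (y : F) : L y = 0 := by
  rw [← hf.fderiv, ← inner_gradient_left, h, inner_zero_left]

theorem mul_exp_two_mul_sq_eq_four_of_sq_add_eq_zero {η lam x K : ℝ} (hη : 0 < η)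
    (hK : K ^ 2 = 1) (h0 : x ^ 2 + η * exp (lam * x) * K = 0)
    (h1 : 2 * x + lam * η * exp (lam * x) * K = 0) :
    η * exp 2 * lam ^ 2 = 4 := by
  have hE := exp_pos (lam * x)
  have hx : x ≠ 0 := by
    rintro rfl
    have : K = 0 := by simpa [hη.ne', hE.ne'] using h0
    simp [this] at hK
  have hlx : lam * x = 2 := by
    have : x * (lam * x) = x * 2 := by linear_combination lam * h0 - h1
    exact mul_left_cancel₀ hx this
  rw [hlx] at h0
  obtain rfl : K = -1 := by
    rcases sq_eq_one_iff.mp hK with rfl | rfl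
    · nlinarith [exp_pos 2]
    · rfl
  linear_combination (-lam ^ 2) * h0 + (lam * x + 2) * hlx

section Model

variable {ι : Type*} [Fintype ι]

noncomputable def quadPlusExpCos (q : ι → ℝ) (c lam : ℝ) (a b : ι) (w : EuclideanSpace ℝ ι) : ℝ :=
  ∑ i, q i * w i ^ 2 + c * exp (lam * w a) * cos (lam * w b)

theorem hasFDerivAt_sum_mul_sq (q : ι → ℝ) (v : EuclideanSpace ℝ ι) :
    HasFDerivAt (fun w : EuclideanSpace ℝ ι => ∑ i, q i * w i ^ 2)
      (∑ i, (2 * q i * v i) • EuclideanSpace.proj (𝕜 := ℝ) i) v := by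
  refine HasFDerivAt.fun_sum fun i _ => ?_
  have hsq := ((EuclideanSpace.proj (𝕜 := ℝ) i).hasFDerivAt (x := v)).pow 2
  refine (hsq.const_mul (q i)).congr_fderiv ?_
  ext w
  simp only [PiLp.proj_apply, smul_apply, smul_eq_mul, Nat.add_one_sub_one,
    pow_one, nsmul_eq_mul, Nat.cast_ofNat]
  ring

theorem hasFDerivAt_const_mul_exp_mul_cos (c lam : ℝ) (a b : ι) (v : EuclideanSpace ℝ ι) :
    HasFDerivAt (fun w : EuclideanSpace ℝ ι => c * exp (lam * w a) * cos (lam * w b))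
      ((c * lam * exp (lam * v a) * cos (lam * v b)) • EuclideanSpace.proj (𝕜 := ℝ) a
        - (c * lam * exp (lam * v a) * sin (lam * v b)) • EuclideanSpace.proj (𝕜 := ℝ) b) v := by
  have hexp := (((EuclideanSpace.proj a).hasFDerivAt (x := v)).const_mul lam).exp
  have hcos := (((EuclideanSpace.proj b).hasFDerivAt (x := v)).const_mul lam).cos
  refine ((hexp.const_mul c).mul hcos).congr_fderiv ?_
  ext w
  simp only [PiLp.proj_apply, add_apply, sub_apply, smul_apply, smul_eq_mul, neg_mul, mul_neg]
  ring

variable [DecidableEq ι] {q : ι → ℝ} {c lam : ℝ} {a b : ι} {v : EuclideanSpace ℝ ι}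

theorem quadPlusExpCos_partial_eq_zero_of_gradient_eq_zero
    (h : gradient (quadPlusExpCos q c lam a b) v = 0) (j : ι) :
    2 * q j * v j + (if j = a then c * lam * exp (lam * v a) * cos (lam * v b) else 0)
      - (if j = b then c * lam * exp (lam * v a) * sin (lam * v b) else 0) = 0 := by
  have hf := (hasFDerivAt_sum_mul_sq q v).add (hasFDerivAt_const_mul_exp_mul_cos c lam a b v)
  have := hf.apply_eq_zero_of_gradient_eq_zero (f := quadPlusExpCos q c lam a b) h
    (EuclideanSpace.single j 1)
  simpa [PiLp.single_apply, Finset.sum_ite_eq', eq_comm, add_sub_assoc] using this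

theorem quadPlusExpCos_sum_eq_of_gradient_eq_zero (hab : a ≠ b)
    (h : gradient (quadPlusExpCos q c lam a b) v = 0) :
    ∑ i, q i * v i ^ 2 = q a * v a ^ 2 + q b * v b ^ 2 := by
  refine Finset.sum_eq_add a b hab (fun j _ hj => ?_) (by simp) (by simp)
  have hj' := quadPlusExpCos_partial_eq_zero_of_gradient_eq_zero h j
  rw [if_neg hj.1, if_neg hj.2] at hj'
  linear_combination (v j / 2) * hj'

theorem mul_exp_two_mul_sq_eq_four_of_quadPlusExpCos_eq_zero (hab : a ≠ b) (ha : q a = 1)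
    (hb : q b = 0) (hc : 0 < c) (hlam : lam ≠ 0) (h0 : quadPlusExpCos q c lam a b v = 0)
    (h : gradient (quadPlusExpCos q c lam a b) v = 0) :
    c * exp 2 * lam ^ 2 = 4 := by
  have hsum := quadPlusExpCos_sum_eq_of_gradient_eq_zero hab h
  have hda := quadPlusExpCos_partial_eq_zero_of_gradient_eq_zero h a
  have hdb := quadPlusExpCos_partial_eq_zero_of_gradient_eq_zero h b
  simp only [if_pos, if_neg hab, if_neg hab.symm, ha, hb] at hda hdb
  have hsin : sin (lam * v b) = 0 := by
    have : c * lam * exp (lam * v a) ≠ 0 := by positivity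
    simpa [this] using hdb
  have hcos : cos (lam * v b) ^ 2 = 1 := by
    linear_combination sin_sq_add_cos_sq (lam * v b) - sin (lam * v b) * hsin
  refine mul_exp_two_mul_sq_eq_four_of_sq_add_eq_zero (x := v a) hc hcos ?_
    (by linear_combination hda)
  rw [quadPlusExpCos, hsum, ha, hb] at h0
  linear_combination h0

end Model

theorem exp_neg_mul_zpow_neg_four_mul_exp_two_mul_sq_lt {lam : ℝ} (hlam : 2 ≤ lam) :
    exp (-lam) * lam ^ (-4 : ℤ) * exp 2 * lam ^ 2 < 4 := by
  have hpos : 0 < lam := by linarith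
  have hexp : exp (-lam) * exp 2 ≤ 1 := by
    rw [← exp_add, exp_le_one_iff]
    linarith
  calc exp (-lam) * lam ^ (-4 : ℤ) * exp 2 * lam ^ 2 = exp (-lam) * exp 2 / lam ^ 2 := by
        rw [zpow_neg, zpow_ofNat]
        field_simp
    _ ≤ 1 / lam ^ 2 := by gcongr
    _ < 4 := by
        rw [div_lt_iff₀ (by positivity)]
        nlinarith

def harmonicQuadWeights {n : ℕ} (ℓ : ℕ) (i : Fin n) : ℝ :=
  if (i : ℕ) < ℓ then 1 else if (i : ℕ) = ℓ then -ℓ else 0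

theorem sum_ite_sq_sub_eq_sum_harmonicQuadWeights {n ℓ : ℕ} (hℓ : ℓ < n)
    (v : EuclideanSpace ℝ (Fin n)) :
    (∑ i : Fin n, if (i : ℕ) < ℓ then v i ^ 2 else 0) - ℓ * v ⟨ℓ, hℓ⟩ ^ 2
      = ∑ i, harmonicQuadWeights ℓ i * v i ^ 2 := by
  have hterm : ∀ i : Fin n, harmonicQuadWeights ℓ i * v i ^ 2
      = (if (i : ℕ) < ℓ then v i ^ 2 else 0) - if ⟨ℓ, hℓ⟩ = i then ℓ * v i ^ 2 else 0 := by
    intro i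
    unfold harmonicQuadWeights
    split_ifs <;> simp_all [Fin.ext_iff]
  rw [Finset.sum_congr rfl fun i _ => hterm i, Finset.sum_sub_distrib, Finset.sum_ite_eq]
  simp

/-- for all sufficiently large `m`, zero is a regular value of
`u_m(v) = |X|² - ℓ y² + η_m e^{λ_m x₁} cos(λ_m z)` on the open unit ball of `ℝ^n`:
wherever `u_m = 0` in `B₁`, the gradient `∇u_m` is nonzero.  Here `X = (v 0,…,v (ℓ-1))`,
`y = v ℓ`, `z = v (ℓ+1)`, `λ_m = 8πm`, `η_m = e^{-λ_m} λ_m⁻⁴`. -/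
theorem zero_regular_value (n ℓ : ℕ) (hℓ : 1 ≤ ℓ) (hℓn : ℓ ≤ n - 2)
    (u : ℕ → EuclideanSpace ℝ (Fin n) → ℝ)
    (hu : ∀ (m : ℕ) (v : EuclideanSpace ℝ (Fin n)), u m v =
      (∑ i : Fin n, if (i : ℕ) < ℓ then (v i) ^ 2 else 0)
        - (ℓ : ℝ) * (v ⟨ℓ, by omega⟩) ^ 2
        + (Real.exp (-(8 * π * m)) * (8 * π * m) ^ (-4 : ℤ))
            * Real.exp ((8 * π * m) * v ⟨0, by omega⟩)
            * Real.cos ((8 * π * m) * v ⟨ℓ + 1, by omega⟩)) :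
    ∃ m₀ : ℕ, ∀ m : ℕ, m₀ ≤ m →
      ∀ v : EuclideanSpace ℝ (Fin n), ‖v‖ < 1 → u m v = 0 → gradient (u m) v ≠ 0 := by
  refine ⟨1, fun m hm v _ hzero hcrit => ?_⟩
  set lam : ℝ := 8 * π * m
  have hlam : 2 ≤ lam := by
    have : (1 : ℝ) ≤ m := by exact_mod_cast hm
    nlinarith [pi_gt_three]
  have hu_eq : u m = quadPlusExpCos (harmonicQuadWeights ℓ) (exp (-lam) * lam ^ (-4 : ℤ)) lam
      ⟨0, by omega⟩ ⟨ℓ + 1, by omega⟩ := by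
    funext w
    rw [hu, sum_ite_sq_sub_eq_sum_harmonicQuadWeights, quadPlusExpCos]
  rw [hu_eq] at hzero hcrit
  have hfour := mul_exp_two_mul_sq_eq_four_of_quadPlusExpCos_eq_zero (by simp)
    (by simp [harmonicQuadWeights]; omega) (by simp [harmonicQuadWeights]) (by positivity)
    (by positivity) hzero hcrit
  exact (exp_neg_mul_zpow_neg_four_mul_exp_two_mul_sq_lt hlam).ne hfour
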